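/- arXiv:1309.2216 — 2 statements merged into one kernel-verified Lean document; each statement's English description precedes it below -/
import Mathlib

section
/- Let n be a positive integer and X ∈ 𝒯(n) a triangulation of the punctured n-gon. Then the projective arc at the residue class of n (i.e., at 0 ∈ ℤ/nℤ) belongs to X if and only if for each j ∈ {1, …, n} every inner arc in X whose terminal point is the residue class of j has length at most j. In other words, 𝒮(n) = 𝒯(n; 1, 2, …, n), where 𝒮(n) := {X ∈ 𝒯(n) : the projective arc at the residue class of n belongs to X}. -/
/-!
Combinatorial model of admissible arcs and triangulations of a regular
`n`-gon with one puncture (following Adachi, "The classification of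
τ-tilting modules over Nakayama algebras").
-/

namespace Punctured

/-- Admissible arcs in a regular `n`-gon with one puncture:
an *inner arc* `inner i t` runs counterclockwise from vertex `i` to vertex
`i + t` (with `2 ≤ t ≤ n` required for admissibility); a *projective arc*
`proj j` runs from the puncture to the vertex `j`. -/
inductive Arc (n : ℕ) : Type
  | inner (i : ZMod n) (t : ℕ) : Arc n
  | proj (j : ZMod n) : Arc n

namespace Arc

/-- The terminal point of an admissible arc. -/
def terminal {n : ℕ} : Arc n → ZMod n
  | .inner i t => i + (t : ZMod n)
  | .proj j => j

/-- Admissibility: inner arcs must have length `2 ≤ t ≤ n`. -/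
def IsAdmissible {n : ℕ} : Arc n → Prop
  | .inner _ t => 2 ≤ t ∧ t ≤ n
  | .proj _ => True

/-- Compatibility (non-crossing) of two admissible arcs, defined via
lifts to `ℤ`. -/
def Compatible {n : ℕ} : Arc n → Arc n → Prop
  | .inner i t, .inner k s =>
      ¬ ∃ x y : ℤ, (x : ZMod n) = i ∧ (y : ZMod n) = k ∧
        ((x < y ∧ y < x + (t : ℤ) ∧ x + (t : ℤ) < y + (s : ℤ)) ∨
         (y < x ∧ x < y + (s : ℤ) ∧ y + (s : ℤ) < x + (t : ℤ)))
  | .inner i t, .proj j =>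
      ¬ ∃ x y : ℤ, (x : ZMod n) = i ∧ (y : ZMod n) = j ∧ x < y ∧ y < x + (t : ℤ)
  | .proj j, .inner i t =>
      ¬ ∃ x y : ℤ, (x : ZMod n) = i ∧ (y : ZMod n) = j ∧ x < y ∧ y < x + (t : ℤ)
  | .proj _, .proj _ => True

end Arc

/-- A set of admissible arcs which is pairwise compatible. -/
def PairwiseCompatible (n : ℕ) (X : Set (Arc n)) : Prop :=
  (∀ a ∈ X, a.IsAdmissible) ∧ ∀ a ∈ X, ∀ b ∈ X, a.Compatible b

/-- A triangulation of the punctured `n`-gon: a pairwise compatible set of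
admissible arcs, maximal under inclusion among such sets. -/
def IsTriangulation (n : ℕ) (X : Set (Arc n)) : Prop :=
  PairwiseCompatible n X ∧
    ∀ Y : Set (Arc n), PairwiseCompatible n Y → X ⊆ Y → Y = X

/-- `top(X)`: for each residue class `c`, the number of arcs of `X` with
terminal point `c`. -/
noncomputable def topSeq (n : ℕ) (X : Set (Arc n)) : ZMod n → ℕ :=
  fun c => {arc ∈ X | Arc.terminal arc = c}.ncard

/-- The representative of `p` modulo `n` lying in `{1, …, n}`. -/
def resRep (n : ℕ) (p : ℤ) : ℕ := ((p - 1) % (n : ℤ)).toNat + 1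

/-- `a'_p := Σ_{j=1}^{(p)_n} (a_j - 1)`, the `n`-periodic extension of the
partial-sum sequence of `a`. -/
def psum (n : ℕ) (a : ZMod n → ℕ) (p : ℤ) : ℤ :=
  ∑ j ∈ Finset.Icc 1 (resRep n p), ((a ((j : ℕ) : ZMod n) : ℤ) - 1)

/-- `‖a'‖ := max {a'_1, …, a'_n}`. -/
noncomputable def pnorm (n : ℕ) (a : ZMod n → ℕ) : ℤ :=
  sSup ((fun i : ℕ => psum n a (i : ℤ)) '' Set.Icc 1 n)

/-- `δ_p = 1` if `a'_p = ‖a'‖` and `δ_p = 0` otherwise. -/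
noncomputable def deltaInt (n : ℕ) (a : ZMod n → ℕ) (p : ℤ) : ℤ :=
  if psum n a p = pnorm n a then 1 else 0

/-- `k_s^j := max {k ∈ ℤ : k < j - 1 and a'_k = a'_{j-1} + s}`. -/
noncomputable def kmax (n : ℕ) (a : ZMod n → ℕ) (j s : ℤ) : ℤ :=
  sSup {k : ℤ | k < j - 1 ∧ psum n a k = psum n a (j - 1) + s}

/-- `ℓ_j(a)`. -/
noncomputable def ellj (n : ℕ) (a : ZMod n → ℕ) (j : ℕ) : ℤ :=
  if (a ((j : ℕ) : ZMod n) : ℤ) - deltaInt n a (j : ℤ) = 0 then 0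
  else (j : ℤ) - kmax n a (j : ℤ) ((a ((j : ℕ) : ZMod n) : ℤ) - deltaInt n a (j : ℤ))

/-!
An inner arc crosses the projective arc at vertex `0` exactly when `0` lies strictly inside it,
i.e. when its terminal point is `j` for some `1 ≤ j` below its length. Hence the length bounds
say precisely that the projective arc at `0` is compatible with every arc of `X`, and by
maximality of the triangulation this happens iff it already belongs to `X`.
-/

namespace Arc

variable {n : ℕ}

theorem Compatible.symm {a b : Arc n} (h : a.Compatible b) : b.Compatible a := by
  cases a <;> cases b <;> simp only [Compatible] at h ⊢
  · rintro ⟨x, y, hx, hy, hcross⟩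
    exact h ⟨y, x, hy, hx, hcross.symm⟩
  all_goals exact h

theorem compatible_inner_proj_zero_iff {i : ZMod n} {t : ℕ} :
    (inner i t).Compatible (proj 0) ↔ ∀ j : ℕ, 1 ≤ j → j < t → i + (t : ZMod n) ≠ j := by
  simp only [Compatible]
  constructor
  · rintro hcomp j hj hjt hterm
    refine hcomp ⟨(j : ℤ) - t, 0, ?_, by simp, by omega, by omega⟩
    push_cast
    rw [← hterm]
    ring
  · rintro h ⟨x, y, hx, hy, hxy, hyxt⟩
    lift x + t - y to ℕ using by omega with j hj
    refine h j (by omega) (by omega) ?_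
    have hcast : ((x + t - y : ℤ) : ZMod n) = i + t := by push_cast; rw [hx, hy]; ring
    rw [← hcast, ← hj]
    push_cast
    rfl

end Arc

theorem IsTriangulation.mem_of_forall_compatible {n : ℕ} {X : Set (Arc n)}
    (hX : IsTriangulation n X) {a : Arc n} (ha : a.IsAdmissible) (haa : a.Compatible a)
    (haX : ∀ b ∈ X, a.Compatible b) : a ∈ X := by
  have hcompat : PairwiseCompatible n (insert a X) := by
    refine ⟨?_, ?_⟩
    · rintro b (rfl | hb)
      exacts [ha, hX.1.1 b hb]
    · rintro b (rfl | hb) c (rfl | hc)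
      exacts [haa, haX c hc, (haX b hb).symm, hX.1.2 b hb c hc]
  rw [← hX.2 _ hcompat (Set.subset_insert a X)]
  exact Set.mem_insert a X

theorem proj_n_mem_iff_general (n : ℕ)
    (X : Set (Arc n)) (hX : IsTriangulation n X) :
    Arc.proj ((n : ℕ) : ZMod n) ∈ X ↔
      ∀ j ∈ Finset.Icc 1 n, ∀ i : ZMod n, ∀ t : ℕ,
        Arc.inner i t ∈ X → i + (t : ZMod n) = ((j : ℕ) : ZMod n) → t ≤ j := by
  rw [ZMod.natCast_self]
  constructor
  · intro hproj j hj i t hmem hterm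
    by_contra! hjt
    exact Arc.compatible_inner_proj_zero_iff.mp (hX.1.2 _ hmem _ hproj) j
      (Finset.mem_Icc.mp hj).1 hjt hterm
  · intro hlen
    refine hX.mem_of_forall_compatible trivial trivial fun b hb => ?_
    cases b with
    | proj => trivial
    | inner i t =>
      refine (Arc.compatible_inner_proj_zero_iff.mpr fun j hj hjt hterm => ?_).symm
      have htn : t ≤ n := (hX.1.1 _ hb).2
      have := hlen j (Finset.mem_Icc.mpr ⟨hj, by omega⟩) i t hb hterm
      omega

/-- **Adachi, equality `𝒮(n) = 𝒯(n; 1, 2, …, n)` (proof of Corollary 2.15).**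
Let `X` be a triangulation of the punctured `n`-gon. Then the projective arc
at the residue class of `n` belongs to `X` if and only if for each
`j ∈ {1, …, n}` every inner arc in `X` with terminal point the residue class
of `j` has length at most `j`. -/
theorem proj_n_mem_iff (n : ℕ) (hn : 0 < n)
    (X : Set (Arc n)) (hX : IsTriangulation n X) :
    Arc.proj ((n : ℕ) : ZMod n) ∈ X ↔
      ∀ j ∈ Finset.Icc 1 n, ∀ i : ZMod n, ∀ t : ℕ,
        Arc.inner i t ∈ X → i + (t : ZMod n) = ((j : ℕ) : ZMod n) → t ≤ j :=
  proj_n_mem_iff_general n X hX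

end Punctured
end

section
/- Let n be a positive integer and a ∈ 𝒵(n). Then a'_i ≤ 0 for all i ∈ {1, …, n} if and only if ℓ_j(a) ≤ j for all j ∈ {1, …, n}; that is, 𝒴(n) = 𝒵(n; 1, 2, …, n). (Equality established in the proof of Adachi, Corollary 2.15.) -/
/-!
Combinatorial model of admissible arcs and triangulations of a regular
`n`-gon with one puncture (following Adachi, "The classification of
τ-tilting modules over Nakayama algebras").
-/

namespace Punctured

section Helpers

variable {n : ℕ}

lemma resRep_pos (p : ℤ) : 1 ≤ resRep n p := Nat.le_add_left 1 _

lemma resRep_le (hn : 0 < n) (p : ℤ) : resRep n p ≤ n := by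
  have h1 : (p - 1) % (n:ℤ) < n := Int.emod_lt_of_pos _ (by exact_mod_cast hn)
  have h0 : 0 ≤ (p - 1) % (n:ℤ) := Int.emod_nonneg _ (by positivity)
  unfold resRep; omega

lemma resRep_dvd (hn : 0 < n) (p : ℤ) : (n:ℤ) ∣ p - (resRep n p : ℤ) := by
  have h0 : 0 ≤ (p - 1) % (n:ℤ) := Int.emod_nonneg _ (by positivity)
  have h1 : (resRep n p : ℤ) = (p-1) % n + 1 := by unfold resRep; push_cast; omega
  have h2 : p - (resRep n p : ℤ) = (p - 1) - (p-1) % n := by rw [h1]; ring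
  rw [h2]; exact Int.dvd_self_sub_of_emod_eq rfl

lemma resRep_eq (hn : 0 < n) (p : ℤ) {m : ℕ} (h1 : 1 ≤ m) (h2 : m ≤ n)
    (hd : (n:ℤ) ∣ p - m) : resRep n p = m := by
  have hd2 := resRep_dvd hn p
  obtain ⟨k, hk⟩ : (n:ℤ) ∣ (m : ℤ) - (resRep n p : ℤ) := by
    have := dvd_sub hd hd2
    simpa using (dvd_sub hd2 hd)
  have hb1 := resRep_pos (n := n) p
  have hb2 := resRep_le hn p
  have hn' : (1:ℤ) ≤ n := by exact_mod_cast hn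
  have hm1 : (1:ℤ) ≤ (m:ℤ) := by exact_mod_cast h1
  have hm2 : (m:ℤ) ≤ n := by exact_mod_cast h2
  have hr1 : (1:ℤ) ≤ (resRep n p : ℤ) := by exact_mod_cast hb1
  have hr2 : ((resRep n p : ℤ)) ≤ n := by exact_mod_cast hb2
  have hk0 : k = 0 := by
    rcases lt_trichotomy k 0 with h | h | h
    · nlinarith
    · exact h
    · nlinarith
  have : (m:ℤ) = (resRep n p : ℤ) := by rw [hk0] at hk; linarith
  exact_mod_cast this.symm

lemma resRep_cast (hn : 0 < n) (p : ℤ) :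
    ((resRep n p : ℕ) : ZMod n) = (p : ZMod n) := by
  have h : ((resRep n p : ℤ) : ZMod n) = (p : ZMod n) := by
    rw [ZMod.intCast_eq_intCast_iff]
    exact Int.modEq_iff_dvd.mpr (resRep_dvd hn p)
  simpa using h

variable (a : ZMod n → ℕ)

lemma psum_congr {p q : ℤ} (h : resRep n p = resRep n q) : psum n a p = psum n a q := by
  unfold psum; rw [h]

lemma sum_total (ha : ∑ p ∈ Finset.Icc 1 n, a ((p : ℕ) : ZMod n) = n) :
    ∑ j ∈ Finset.Icc 1 n, ((a ((j : ℕ) : ZMod n) : ℤ) - 1) = 0 := by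
  rw [Finset.sum_sub_distrib]
  rw [Finset.sum_const, Nat.card_Icc]
  have : ∑ j ∈ Finset.Icc 1 n, ((a ((j : ℕ) : ZMod n) : ℤ)) = ((n : ℕ) : ℤ) := by
    rw [← Nat.cast_sum]; exact_mod_cast congrArg (Nat.cast : ℕ → ℤ) ha
  rw [this]; simp

lemma psum_n (hn : 0 < n) (ha : ∑ p ∈ Finset.Icc 1 n, a ((p : ℕ) : ZMod n) = n) :
    psum n a (n : ℤ) = 0 := by
  have h : resRep n (n : ℤ) = n := resRep_eq hn _ hn le_rfl (by simp)
  unfold psum; rw [h]; exact sum_total a ha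

lemma psum_zero (hn : 0 < n) (ha : ∑ p ∈ Finset.Icc 1 n, a ((p : ℕ) : ZMod n) = n) :
    psum n a 0 = 0 := by
  have h : resRep n 0 = n := resRep_eq hn _ hn le_rfl (by simp)
  unfold psum; rw [h]; exact sum_total a ha

lemma psum_sub_n (hn : 0 < n) (p : ℤ) : psum n a (p - n) = psum n a p := by
  apply psum_congr
  apply resRep_eq hn _ (resRep_pos p) (resRep_le hn p)
  have h := resRep_dvd hn p
  have : p - (n:ℤ) - (resRep n p : ℤ) = (p - (resRep n p : ℤ)) - n := by ring
  rw [this]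
  exact dvd_sub h (dvd_refl _)

lemma psum_step (hn : 0 < n) (ha : ∑ p ∈ Finset.Icc 1 n, a ((p : ℕ) : ZMod n) = n)
    (p : ℤ) : psum n a p = psum n a (p - 1) + ((a ((p : ℤ) : ZMod n) : ℤ) - 1) := by
  have hr1 : 1 ≤ resRep n p := resRep_pos p
  have hrn : resRep n p ≤ n := resRep_le hn p
  have hdp := resRep_dvd hn p
  have hcast : ((resRep n p : ℕ) : ZMod n) = (p : ZMod n) := resRep_cast hn p
  rcases eq_or_lt_of_le hr1 with h1 | h2
  · -- resRep n p = 1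
    have hprev : resRep n (p - 1) = n := by
      apply resRep_eq hn _ hn le_rfl
      have : p - 1 - (n:ℤ) = (p - (resRep n p : ℤ)) - n := by rw [← h1]; push_cast; ring
      rw [this]
      exact dvd_sub hdp (dvd_refl _)
    have hcur : psum n a p = (a ((1 : ℕ) : ZMod n) : ℤ) - 1 := by
      unfold psum; rw [← h1]; simp
    have hpv : psum n a (p - 1) = 0 := by
      unfold psum; rw [hprev]; exact sum_total a ha
    rw [hcur, hpv, ← hcast, ← h1]
    ring
  · -- 2 ≤ resRep n p
    have hprev : resRep n (p - 1) = resRep n p - 1 := by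
      apply resRep_eq hn _ (by omega) (by omega)
      push_cast [Nat.cast_sub (by omega : 1 ≤ resRep n p)]
      have : p - 1 - ((resRep n p : ℤ) - 1) = p - (resRep n p : ℤ) := by ring
      rw [this]; exact hdp
    unfold psum
    rw [hprev]
    have hsplit : resRep n p = (resRep n p - 1) + 1 := by omega
    rw [hsplit, Finset.sum_Icc_succ_top (by omega)]
    rw [show resRep n p - 1 + 1 = resRep n p from by omega, hcast]

lemma psum_le_pnorm (hn : 0 < n) {i : ℕ} (h1 : 1 ≤ i) (h2 : i ≤ n) :
    psum n a (i : ℤ) ≤ pnorm n a := by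
  apply le_csSup (((Set.finite_Icc 1 n).image _).bddAbove)
  exact ⟨i, ⟨h1, h2⟩, rfl⟩

lemma pnorm_mem (hn : 0 < n) : ∃ i : ℕ, 1 ≤ i ∧ i ≤ n ∧ psum n a (i : ℤ) = pnorm n a := by
  have hne : ((fun i : ℕ => psum n a (i : ℤ)) '' Set.Icc 1 n).Nonempty :=
    ⟨psum n a (n : ℤ), ⟨n, ⟨hn, le_rfl⟩, rfl⟩⟩
  obtain ⟨i, hi, hv⟩ := hne.csSup_mem ((Set.finite_Icc 1 n).image _)
  exact ⟨i, hi.1, hi.2, hv⟩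

lemma pnorm_nonneg (hn : 0 < n) (ha : ∑ p ∈ Finset.Icc 1 n, a ((p : ℕ) : ZMod n) = n) :
    0 ≤ pnorm n a := by
  rw [← psum_n a hn ha]; exact psum_le_pnorm a hn hn le_rfl

/-- discrete downward IVT -/
lemma exists_hit (hn : 0 < n) (ha : ∑ p ∈ Finset.Icc 1 n, a ((p : ℕ) : ZMod n) = n)
    (v : ℤ) (hv0 : v ≤ 0) :
    ∀ m : ℕ, psum n a (m : ℤ) < v →
      ∃ k : ℕ, k < m ∧ psum n a (k : ℤ) = v ∧ psum n a ((k : ℤ) + 1) < v := by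
  intro m
  induction m with
  | zero =>
    intro hm
    have : psum n a ((0:ℕ) : ℤ) = 0 := by simpa using psum_zero a hn ha
    omega
  | succ m ih =>
    intro hm
    by_cases hc : psum n a (m : ℤ) < v
    · obtain ⟨k, hk1, hk2, hk3⟩ := ih hc
      exact ⟨k, by omega, hk2, hk3⟩
    · push_neg at hc
      refine ⟨m, by omega, ?_, ?_⟩
      · have hstep := psum_step a hn ha ((m : ℤ) + 1)
        have hcast : ((m : ℤ) + 1) = ((m + 1 : ℕ) : ℤ) := by push_cast; ring
        rw [hcast] at hstep
        have : psum n a ((m+1 : ℕ) : ℤ) ≥ psum n a (m : ℤ) - 1 := by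
          rw [hstep]
          have : (0:ℤ) ≤ (a (((m+1:ℕ) : ℤ) : ZMod n) : ℤ) := by positivity
          have heq : ((m + 1 : ℕ) : ℤ) - 1 = (m : ℤ) := by push_cast; ring
          rw [heq]
          omega
        omega
      · have : ((m : ℤ) + 1) = ((m + 1 : ℕ) : ℤ) := by push_cast; ring
        rw [this]; exact hm

end Helpers

/-- **Adachi, equality `𝒴(n) = 𝒵(n; 1, 2, …, n)` (proof of Corollary 2.15).**
For `a ∈ 𝒵(n)`: `a'_i ≤ 0` for all `i ∈ {1, …, n}` if and only if
`ℓ_j(a) ≤ j` for all `j ∈ {1, …, n}`. -/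
theorem Y_eq_Z_restricted (n : ℕ) (hn : 0 < n) (a : ZMod n → ℕ)
    (ha : ∑ p ∈ Finset.Icc 1 n, a ((p : ℕ) : ZMod n) = n) :
    (∀ i ∈ Finset.Icc 1 n, psum n a (i : ℤ) ≤ 0) ↔
      (∀ j ∈ Finset.Icc 1 n, ellj n a j ≤ (j : ℤ)) := by
  constructor
  · -- forward direction
    intro hle j hj
    rw [Finset.mem_Icc] at hj
    obtain ⟨hj1, hjn⟩ := hj
    by_cases hs : (a ((j : ℕ) : ZMod n) : ℤ) - deltaInt n a (j : ℤ) = 0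
    · rw [ellj, if_pos hs]
      exact_mod_cast Nat.zero_le j
    · rw [ellj, if_neg hs]
      have hpn : pnorm n a = 0 := by
        obtain ⟨i, hi1, hi2, hiv⟩ := pnorm_mem a hn
        have h1 := hle i (Finset.mem_Icc.mpr ⟨hi1, hi2⟩)
        have h2 := pnorm_nonneg a hn ha
        omega
      have hstepj := psum_step a hn ha (j : ℤ)
      rw [show (((j:ℤ)) : ZMod n) = ((j : ℕ) : ZMod n) by push_cast; rfl] at hstepj
      have hlej := hle j (Finset.mem_Icc.mpr ⟨hj1, hjn⟩)
      obtain ⟨k, hk0, hk1, hk2⟩ :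
          ∃ k : ℤ, 0 ≤ k ∧ k < (j:ℤ) - 1 ∧ psum n a k = psum n a ((j:ℤ) - 1)
            + ((a ((j : ℕ) : ZMod n) : ℤ) - deltaInt n a (j : ℤ)) := by
        by_cases hd : psum n a (j:ℤ) = pnorm n a
        · have hd1 : deltaInt n a (j:ℤ) = 1 := by rw [deltaInt, if_pos hd]
          have hj2 : 2 ≤ j := by
            by_contra hcc
            have hj1' : j = 1 := by omega
            subst hj1'
            have h0 : psum n a ((1:ℤ) - 1) = 0 := by
              norm_num [psum_zero a hn ha]
            have h1 : ((1:ℕ) : ℤ) = (1 : ℤ) := by norm_num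
            rw [h1] at hstepj hd
            rw [hd1] at hs
            omega
          refine ⟨0, le_rfl, by omega, ?_⟩
          rw [psum_zero a hn ha, hd1]
          omega
        · have hd0 : deltaInt n a (j:ℤ) = 0 := by rw [deltaInt, if_neg hd]
          rw [hpn] at hd
          have hneg : psum n a (j:ℤ) ≤ -1 := by omega
          have hvle : psum n a (j:ℤ) + 1 ≤ 0 := by omega
          obtain ⟨k, hk1, hk2, hk3⟩ :=
            exists_hit a hn ha (psum n a (j:ℤ) + 1) hvle j (by omega)
          have hknej : k ≠ j - 1 := by
            intro hkk
            subst hkk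
            have hcast : (((j - 1 : ℕ)) : ℤ) = (j:ℤ) - 1 := by
              push_cast [Nat.cast_sub hj1]; ring
            rw [hcast] at hk2
            rw [hd0] at hs
            omega
          refine ⟨(k : ℤ), by positivity, by omega, ?_⟩
          rw [hd0, hk2]
          omega
      have hbdd : BddAbove {k : ℤ | k < (j:ℤ) - 1 ∧ psum n a k = psum n a ((j:ℤ) - 1)
          + ((a ((j : ℕ) : ZMod n) : ℤ) - deltaInt n a (j : ℤ))} :=
        ⟨(j:ℤ) - 2, fun x hx => by have := hx.1; omega⟩
      have hkm : k ≤ kmax n a (j:ℤ) ((a ((j : ℕ) : ZMod n) : ℤ) - deltaInt n a (j : ℤ)) :=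
        le_csSup hbdd (Set.mem_setOf.mpr ⟨hk1, hk2⟩)
      omega
  · -- reverse direction
    intro hell
    by_contra hcon
    push_neg at hcon
    obtain ⟨i, hi, hpos⟩ := hcon
    rw [Finset.mem_Icc] at hi
    have hpn : 0 < pnorm n a := lt_of_lt_of_le hpos (psum_le_pnorm a hn hi.1 hi.2)
    have hn2 : 2 ≤ n := by
      by_contra hcc
      have hn1 : n = 1 := by omega
      have hi1 : i = 1 := by omega
      subst hn1; subst hi1
      have h0 : psum 1 a ((1:ℕ) : ℤ) = 0 := by
        have := psum_n a hn ha
        simpa using this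
      omega
    classical
    have hexP : ∃ m : ℕ, 1 ≤ m ∧ m ≤ n ∧ psum n a (m : ℤ) = pnorm n a := pnorm_mem a hn
    have hspec := Nat.find_spec hexP
    set j := Nat.find hexP with hjdef
    obtain ⟨hj1, hjn, hjv⟩ := hspec
    have hmin : ∀ m : ℕ, 1 ≤ m → m ≤ n → m < j → psum n a (m:ℤ) < pnorm n a := by
      intro m h1 h2 h3
      have hne := Nat.find_min hexP h3
      push_neg at hne
      exact lt_of_le_of_ne (psum_le_pnorm a hn h1 h2) (hne h1 h2)
    have hd1 : deltaInt n a (j:ℤ) = 1 := by rw [deltaInt, if_pos hjv]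
    have hstepj := psum_step a hn ha (j:ℤ)
    rw [show (((j:ℤ)) : ZMod n) = ((j : ℕ) : ZMod n) by push_cast; rfl] at hstepj
    have hprev : psum n a ((j:ℤ) - 1) < pnorm n a := by
      rcases eq_or_lt_of_le hj1 with h | h
      · have hh : ((j:ℤ) - 1) = 0 := by omega
        rw [hh, psum_zero a hn ha]; exact hpn
      · have hh : ((j:ℤ) - 1) = ((j - 1 : ℕ) : ℤ) := by
          push_cast [Nat.cast_sub hj1]; ring
        rw [hh]
        exact hmin (j-1) (by omega) (by omega) (by omega)
    have hsval : 1 ≤ (a ((j : ℕ) : ZMod n) : ℤ) - deltaInt n a (j : ℤ) := by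
      rw [hd1]; omega
    have hTne : ((j:ℤ) - (n:ℤ)) ∈ {k : ℤ | k < (j:ℤ) - 1 ∧ psum n a k = psum n a ((j:ℤ)-1)
        + ((a ((j : ℕ) : ZMod n) : ℤ) - deltaInt n a (j : ℤ))} := by
      constructor
      · have : (j:ℤ) ≤ (n:ℤ) := by exact_mod_cast hjn
        have hn2' : (2:ℤ) ≤ (n:ℤ) := by exact_mod_cast hn2
        omega
      · rw [psum_sub_n a hn, hd1]
        omega
    have hub : ∀ x ∈ {k : ℤ | k < (j:ℤ) - 1 ∧ psum n a k = psum n a ((j:ℤ)-1)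
        + ((a ((j : ℕ) : ZMod n) : ℤ) - deltaInt n a (j : ℤ))}, x ≤ -1 := by
      intro x hx
      obtain ⟨hx1, hx2⟩ := hx
      rw [hd1] at hx2
      by_contra hge
      push_neg at hge
      have hx0 : 0 ≤ x := by omega
      lift x to ℕ using hx0 with m
      have hval : psum n a (m : ℤ) = pnorm n a := by omega
      rcases Nat.eq_zero_or_pos m with h0 | h1
      · subst h0
        have : psum n a ((0:ℕ) : ℤ) = 0 := by simpa using psum_zero a hn ha
        omega
      · have hmj : m < j := by
          have : (m:ℤ) < (j:ℤ) := by omega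
          exact_mod_cast this
        have hmn : m ≤ n := by
          have h1' : (j:ℤ) ≤ (n:ℤ) := by exact_mod_cast hjn
          have : (m:ℤ) ≤ (n:ℤ) := by omega
          exact_mod_cast this
        have := hmin m h1 hmn hmj
        omega
    have hkb : kmax n a (j:ℤ) ((a ((j : ℕ) : ZMod n) : ℤ) - deltaInt n a (j : ℤ)) ≤ -1 :=
      csSup_le ⟨_, hTne⟩ hub
    have hellj := hell j (Finset.mem_Icc.mpr ⟨hj1, hjn⟩)
    rw [ellj, if_neg (by omega)] at hellj
    omega


end Punctured
end
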